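/- arXiv:1609.08428 — 4 statements merged into one kernel-verified Lean document; each statement's English description precedes it below -/
import Mathlib

section
/- Under the quadcopter translational dynamics with z₄ = tan(ψ/2), the roll angle satisfies sin φ = (2z₄ẍ − (1−z₄²)ÿ) / ((1+z₄²)·√(ẍ² + ÿ² + (z̈+g)²)). -/
/-!
The thrust acts along the third column `u` of the rotation matrix, a unit vector, so the
acceleration vector `(ẍ, ÿ, z̈ + g) = (T / m) • u` has norm `T / m`. Pairing the horizontal
components with `(sin ψ, -cos ψ)` cancels the pitch terms and leaves `(T / m) sin φ`; the
Weierstrass substitution `z₄ = tan (ψ / 2)` then rewrites `sin ψ` and `cos ψ` rationally.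
-/

open Real

theorem Real.cos_ne_neg_one_of_mem_Ioo {x : ℝ} (hx : x ∈ Set.Ioo (-π) π) : cos x ≠ -1 := by
  have hhalf : 0 < cos (x / 2) := cos_pos_of_mem_Ioo ⟨by linarith [hx.1], by linarith [hx.2]⟩
  have hdouble : cos x = 2 * cos (x / 2) ^ 2 - 1 := by
    rw [← cos_two_mul, mul_div_cancel₀ x two_ne_zero]
  rw [hdouble]
  nlinarith

section ThrustDirection

variable (φ θ ψ : ℝ)

theorem thrustDirection_norm_sq :
    (cos φ * sin θ * cos ψ + sin φ * sin ψ) ^ 2 + (cos φ * sin θ * sin ψ - sin φ * cos ψ) ^ 2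
      + (cos φ * cos θ) ^ 2 = 1 := by
  linear_combination (cos φ ^ 2 * sin θ ^ 2 + sin φ ^ 2) * sin_sq_add_cos_sq ψ
    + cos φ ^ 2 * sin_sq_add_cos_sq θ + sin_sq_add_cos_sq φ

theorem sin_mul_thrustDirection_sub_cos_mul :
    sin ψ * (cos φ * sin θ * cos ψ + sin φ * sin ψ)
      - cos ψ * (cos φ * sin θ * sin ψ - sin φ * cos ψ) = sin φ := by
  linear_combination sin φ * sin_sq_add_cos_sq ψ

end ThrustDirection

theorem stmt_3_general (x'' y'' z'' φ θ ψ T m g z₄ : ℝ)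
    (hT : 0 < T) (hm : 0 < m)
    (hψ : ψ ∈ Set.Ioo (-π) π) (hz4 : z₄ = tan (ψ / 2))
    (hx : m * x'' = T * (cos φ * sin θ * cos ψ + sin φ * sin ψ))
    (hy : m * y'' = T * (cos φ * sin θ * sin ψ - sin φ * cos ψ))
    (hz : m * (z'' + g) = T * (cos φ * cos θ)) :
    sin φ = (2 * z₄ * x'' - (1 - z₄ ^ 2) * y'') /
      ((1 + z₄ ^ 2) * Real.sqrt (x'' ^ 2 + y'' ^ 2 + (z'' + g) ^ 2)) := by
  have hr : 0 < T / m := div_pos hT hm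
  have hx' : x'' = T / m * (cos φ * sin θ * cos ψ + sin φ * sin ψ) := by
    rw [div_mul_eq_mul_div, eq_div_iff hm.ne', mul_comm, hx]
  have hy' : y'' = T / m * (cos φ * sin θ * sin ψ - sin φ * cos ψ) := by
    rw [div_mul_eq_mul_div, eq_div_iff hm.ne', mul_comm, hy]
  have hz' : z'' + g = T / m * (cos φ * cos θ) := by
    rw [div_mul_eq_mul_div, eq_div_iff hm.ne', mul_comm, hz]
  have hnorm : √(x'' ^ 2 + y'' ^ 2 + (z'' + g) ^ 2) = T / m := by
    rw [hx', hy', hz', mul_pow, mul_pow, mul_pow, ← mul_add, ← mul_add,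
      thrustDirection_norm_sq, mul_one, sqrt_sq hr.le]
  have hroll : sin ψ * x'' - cos ψ * y'' = T / m * sin φ := by
    rw [hx', hy']
    linear_combination T / m * sin_mul_thrustDirection_sub_cos_mul φ θ ψ
  have hweierstrass : 2 * z₄ * x'' - (1 - z₄ ^ 2) * y'' = (1 + z₄ ^ 2) * (T / m * sin φ) := by
    rw [← hroll, sin_eq_two_mul_tan_half_div_one_add_tan_half_sq,
      cos_eq_two_mul_tan_half_div_one_sub_tan_half_sq ψ (cos_ne_neg_one_of_mem_Ioo hψ), ← hz4]
    field_simp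
  rw [hnorm, hweierstrass]
  field_simp

theorem stmt_3 (x'' y'' z'' φ θ ψ T m g z₄ : ℝ)
    (hT : 0 < T) (hm : 0 < m) (hφ : 0 < cos φ) (hθ : 0 < cos θ)
    (hψ : ψ ∈ Set.Ioo (-π) π) (hz4 : z₄ = tan (ψ / 2))
    (hx : m * x'' = T * (cos φ * sin θ * cos ψ + sin φ * sin ψ))
    (hy : m * y'' = T * (cos φ * sin θ * sin ψ - sin φ * cos ψ))
    (hz : m * (z'' + g) = T * (cos φ * cos θ)) :
    sin φ = (2 * z₄ * x'' - (1 - z₄ ^ 2) * y'') /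
      ((1 + z₄ ^ 2) * Real.sqrt (x'' ^ 2 + y'' ^ 2 + (z'' + g) ^ 2)) :=
  stmt_3_general x'' y'' z'' φ θ ψ T m g z₄ hT hm hψ hz4 hx hy hz
end

section
/- Under the quadcopter translational dynamics with z₄ = tan(ψ/2) and z̈ + g > 0, the pitch angle satisfies tan θ = ((1−z₄²)ẍ + 2z₄ÿ) / ((1+z₄²)(z̈+g)). -/
open Real

/-! Undoing the yaw, i.e. taking `cos ψ · (x equation) + sin ψ · (y equation)`, cancels the roll terms
and leaves `m (cos ψ · ẍ + sin ψ · ÿ) = T cos φ sin θ`; dividing by the vertical equation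
`m (z̈ + g) = T cos φ cos θ` gives `tan θ`. The Weierstrass substitution
`cos ψ = (1 - z₄²) / (1 + z₄²)`, `sin ψ = 2 z₄ / (1 + z₄²)` then yields the stated form. -/

lemma neg_one_lt_cos_of_mem_Ioo {ψ : ℝ} (hψ : ψ ∈ Set.Ioo (-π) π) : -1 < cos ψ := by
  obtain ⟨hlo, hhi⟩ := hψ
  have hhalf : 0 < cos (ψ / 2) := cos_pos_of_mem_Ioo ⟨by linarith, by linarith⟩
  have hdouble := cos_sq (ψ / 2)
  rw [mul_div_cancel₀ ψ two_ne_zero] at hdouble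
  nlinarith

lemma one_sub_tan_half_sq_mul_add_two_mul_tan_half_mul {ψ : ℝ} (hψ : cos ψ ≠ -1) (x y : ℝ) :
    (1 - tan (ψ / 2) ^ 2) * x + 2 * tan (ψ / 2) * y
      = (1 + tan (ψ / 2) ^ 2) * (cos ψ * x + sin ψ * y) := by
  have hpos : 0 < 1 + tan (ψ / 2) ^ 2 := by positivity
  rw [cos_eq_two_mul_tan_half_div_one_sub_tan_half_sq ψ hψ,
    sin_eq_two_mul_tan_half_div_one_add_tan_half_sq ψ]
  field_simp

lemma tan_eq_div_of_mul_sin_of_mul_cos {k u w θ : ℝ} (hu : k * sin θ = u) (hw : k * cos θ = w)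
    (hw₀ : w ≠ 0) : tan θ = u / w := by
  have hk : k ≠ 0 := by rintro rfl; exact hw₀ (by rw [← hw, zero_mul])
  rw [← hu, ← hw, mul_div_mul_left _ _ hk, tan_eq_sin_div_cos]

theorem stmt_4_general (x'' y'' z'' φ θ ψ T m g z₄ : ℝ)
    (hm : 0 < m)
    (hzg : 0 < z'' + g)
    (hψ : ψ ∈ Set.Ioo (-π) π) (hz4 : z₄ = tan (ψ / 2))
    (hx : m * x'' = T * (cos φ * sin θ * cos ψ + sin φ * sin ψ))
    (hy : m * y'' = T * (cos φ * sin θ * sin ψ - sin φ * cos ψ))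
    (hz : m * (z'' + g) = T * (cos φ * cos θ)) :
    tan θ = ((1 - z₄ ^ 2) * x'' + 2 * z₄ * y'') / ((1 + z₄ ^ 2) * (z'' + g)) := by
  have hhoriz : T * cos φ / m * sin θ = cos ψ * x'' + sin ψ * y'' := by
    field_simp
    linear_combination -cos ψ * hx - sin ψ * hy - T * cos φ * sin θ * sin_sq_add_cos_sq ψ
  have hvert : T * cos φ / m * cos θ = z'' + g := by
    field_simp
    linear_combination -hz
  rw [tan_eq_div_of_mul_sin_of_mul_cos hhoriz hvert hzg.ne', hz4,
    one_sub_tan_half_sq_mul_add_two_mul_tan_half_mul (neg_one_lt_cos_of_mem_Ioo hψ).ne',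
    mul_div_mul_left _ _ (by positivity)]

theorem stmt_4 (x'' y'' z'' φ θ ψ T m g z₄ : ℝ)
    (hT : 0 < T) (hm : 0 < m) (hφ : 0 < cos φ) (hθ : 0 < cos θ)
    (hzg : 0 < z'' + g)
    (hψ : ψ ∈ Set.Ioo (-π) π) (hz4 : z₄ = tan (ψ / 2))
    (hx : m * x'' = T * (cos φ * sin θ * cos ψ + sin φ * sin ψ))
    (hy : m * y'' = T * (cos φ * sin θ * sin ψ - sin φ * cos ψ))
    (hz : m * (z'' + g) = T * (cos φ * cos θ)) :
    tan θ = ((1 - z₄ ^ 2) * x'' + 2 * z₄ * y'') / ((1 + z₄ ^ 2) * (z'' + g)) :=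
  stmt_4_general x'' y'' z'' φ θ ψ T m g z₄ hm hzg hψ hz4 hx hy hz
end

section
/- The quadcopter translational dynamics admit the implicit relation sin φ · √(ẍ² + ÿ² + (z̈+g)²) − sin ψ · ẍ + cos ψ · ÿ = 0. -/
open Real

theorem stmt_6 (x'' y'' z'' φ θ ψ T m g : ℝ)
    (hT : 0 < T) (hm : 0 < m) (hφ : 0 < cos φ) (hθ : 0 < cos θ)
    (hx : m * x'' = T * (cos φ * sin θ * cos ψ + sin φ * sin ψ))
    (hy : m * y'' = T * (cos φ * sin θ * sin ψ - sin φ * cos ψ))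
    (hz : m * (z'' + g) = T * (cos φ * cos θ)) :
    sin φ * Real.sqrt (x'' ^ 2 + y'' ^ 2 + (z'' + g) ^ 2) - sin ψ * x'' + cos ψ * y'' = 0 := by
  have hm' : m ≠ 0 := hm.ne'
  have hx' : x'' = T / m * (cos φ * sin θ * cos ψ + sin φ * sin ψ) := by
    field_simp; linarith
  have hy' : y'' = T / m * (cos φ * sin θ * sin ψ - sin φ * cos ψ) := by
    field_simp; linarith
  have hz' : z'' + g = T / m * (cos φ * cos θ) := by
    field_simp; linarith
  have hsq : x'' ^ 2 + y'' ^ 2 + (z'' + g) ^ 2 = (T / m) ^ 2 := by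
    rw [hx', hy', hz']
    linear_combination ((T / m) ^ 2 * cos φ ^ 2) * sin_sq_add_cos_sq θ +
      ((T / m) ^ 2 * sin φ ^ 2) * sin_sq_add_cos_sq ψ +
      ((T / m) ^ 2 * cos φ ^ 2 * sin θ ^ 2) * sin_sq_add_cos_sq ψ + (T / m) ^ 2 * sin_sq_add_cos_sq φ
  have hs : Real.sqrt (x'' ^ 2 + y'' ^ 2 + (z'' + g) ^ 2) = T / m := by
    rw [hsq, Real.sqrt_sq (by positivity)]
  rw [hs, hx', hy']
  linear_combination (-(sin φ * (T / m))) * sin_sq_add_cos_sq ψ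
end

section
/- If U : [t₀, ∞) → ℝ is bounded and continuous, and k solves k⁽³⁾ + K_d k̈ + K_p k̇ + K_i k = U with K_p, K_d, K_i > 0 and K_p K_d > K_i, then k, k̇, and k̈ are bounded on [t₀, ∞) (BIBO stability of the third-order system). -/
/-!
Since `Ki < Kp * Kd`, the characteristic cubic is negative at `-Kd` and positive at `0`, so it
has a root `r ∈ (-Kd, 0)` and factors as `(s - r) (s² + p s + q)` with `p, q > 0`. Hence
`u = k'' + p k' + q k` solves the stable scalar equation `u' = r u + U` and is bounded, and `k`
solves the damped oscillator `k'' + p k' + q k = u` with bounded forcing. Both are handled by a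
decaying quadratic Lyapunov function `V` with `V' ≤ -a V + b`, which Grönwall's inequality keeps
below `max (V t₀) (b / a)`.
-/

open Set

lemma le_max_of_hasDerivAt_le_neg_mul_add {V V' : ℝ → ℝ} {t₀ a b : ℝ} (ha : 0 < a)
    (hV : ∀ t, t₀ ≤ t → HasDerivAt V (V' t) t) (hV' : ∀ t, t₀ ≤ t → V' t ≤ -a * V t + b) :
    ∀ t, t₀ ≤ t → V t ≤ max (V t₀) (b / a) := by
  intro T hT
  have hgron : V T ≤ gronwallBound (V t₀) (-a) b (T - t₀) :=
    le_gronwallBound_of_liminf_deriv_right_le (f' := V')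
      (fun t ht => (hV t ht.1).continuousAt.continuousWithinAt)
      (fun t ht _ hr => (hV t ht.1).hasDerivWithinAt.liminf_right_slope_le hr)
      le_rfl (fun t ht => hV' t ht.1) T ⟨hT, le_rfl⟩
  -- The Grönwall bound is a convex combination of `V t₀` and `b / a`.
  set e := Real.exp (-a * (T - t₀))
  have he0 : 0 ≤ e := (Real.exp_pos _).le
  have he1 : e ≤ 1 := Real.exp_le_one_iff.mpr (by nlinarith)
  have hconvex : gronwallBound (V t₀) (-a) b (T - t₀) = e * V t₀ + (1 - e) * (b / a) := by
    rw [gronwallBound_of_K_ne_0 (neg_ne_zero.mpr ha.ne'), div_neg]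
    ring
  calc V T ≤ e * V t₀ + (1 - e) * (b / a) := hconvex ▸ hgron
    _ ≤ e * max (V t₀) (b / a) + (1 - e) * max (V t₀) (b / a) := by
        have := sub_nonneg.mpr he1
        gcongr
        exacts [le_max_left _ _, le_max_right _ _]
    _ = max (V t₀) (b / a) := by ring

lemma two_mul_le_mul_sq_add_sq_div {c : ℝ} (hc : 0 < c) (x y : ℝ) :
    2 * x * y ≤ c * x ^ 2 + y ^ 2 / c := by
  have h : c * x ^ 2 + y ^ 2 / c - 2 * x * y = (c * x - y) ^ 2 / c := by
    field_simp
    ring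
  nlinarith [div_nonneg (sq_nonneg (c * x - y)) hc.le]

lemma sq_le_sq_of_abs_le {x C : ℝ} (h : |x| ≤ C) : x ^ 2 ≤ C ^ 2 := by
  simpa only [sq_abs] using pow_le_pow_left₀ (abs_nonneg x) h 2

lemma exists_abs_le_of_hasDerivAt_eq_mul_add {v g : ℝ → ℝ} {t₀ μ C : ℝ} (hμ : μ < 0)
    (hg : ∀ t, t₀ ≤ t → |g t| ≤ C) (hv : ∀ t, t₀ ≤ t → HasDerivAt v (μ * v t + g t) t) :
    ∃ B, ∀ t, t₀ ≤ t → |v t| ≤ B := by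
  have hμ' : 0 < -μ := neg_pos.mpr hμ
  have hV : ∀ t, t₀ ≤ t → HasDerivAt (fun s ↦ v s ^ 2) (2 * v t * (μ * v t + g t)) t :=
    fun t ht ↦ ((hv t ht).fun_pow 2).congr_deriv (by push_cast; ring)
  have hV' : ∀ t, t₀ ≤ t → 2 * v t * (μ * v t + g t) ≤ -(-μ) * v t ^ 2 + C ^ 2 / -μ := by
    intro t ht
    have := two_mul_le_mul_sq_add_sq_div hμ' (v t) (g t)
    have := div_le_div_of_nonneg_right (sq_le_sq_of_abs_le (hg t ht)) hμ'.le
    nlinarith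
  exact ⟨_, fun t ht ↦ Real.abs_le_sqrt (le_max_of_hasDerivAt_le_neg_mul_add hμ' hV hV' t ht)⟩

/-- With `z = y + c x` and `d = q - c (p - c)`, the energy `z² + d x²` of the oscillator
`x'' + p x' + q x = g` decays at rate `2c` up to the forcing. -/
lemma oscillator_energy_deriv_le {p q c : ℝ} (hc : 0 < c) (hcp : 3 * c ≤ p) (x y g : ℝ) :
    2 * (y + c * x) * (g - p * y - q * x + c * y) + 2 * (q - c * (p - c)) * x * y ≤
      -(2 * c) * ((y + c * x) ^ 2 + (q - c * (p - c)) * x ^ 2) + g ^ 2 / (p - c) := by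
  have hpc : 0 < p - c := by linarith
  have hyoung := two_mul_le_mul_sq_add_sq_div hpc (y + c * x) g
  nlinarith [sq_nonneg (y + c * x)]

lemma exists_abs_le_of_oscillator {x y g : ℝ → ℝ} {t₀ p q C : ℝ} (hp : 0 < p) (hq : 0 < q)
    (hg : ∀ t, t₀ ≤ t → |g t| ≤ C) (hx : ∀ t, t₀ ≤ t → HasDerivAt x (y t) t)
    (hy : ∀ t, t₀ ≤ t → HasDerivAt y (g t - p * y t - q * x t) t) :
    ∃ B, ∀ t, t₀ ≤ t → |x t| ≤ B ∧ |y t| ≤ B := by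
  -- `3 c ≤ p` gives the decay rate `2 c` in `oscillator_energy_deriv_le`, `c p ≤ q / 2` gives
  -- `d > 0`.
  set c := min (p / 3) (q / (2 * p))
  have hc : 0 < c := lt_min (by positivity) (by positivity)
  have hcp : 3 * c ≤ p := by linarith [min_le_left (p / 3) (q / (2 * p))]
  have hd : 0 < q - c * (p - c) := by
    have : c * p ≤ q / 2 := by
      have := mul_le_mul_of_nonneg_right (min_le_right (p / 3) (q / (2 * p))) hp.le
      rwa [div_mul_eq_mul_div, mul_div_mul_right _ _ hp.ne'] at this
    nlinarith
  set d := q - c * (p - c)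
  have hV : ∀ t, t₀ ≤ t → HasDerivAt (fun s ↦ (y s + c * x s) ^ 2 + d * x s ^ 2)
      (2 * (y t + c * x t) * (g t - p * y t - q * x t + c * y t) + 2 * d * x t * y t) t := by
    intro t ht
    refine ((((hy t ht).fun_add ((hx t ht).const_mul c)).fun_pow 2).fun_add
      (((hx t ht).fun_pow 2).const_mul d)).congr_deriv ?_
    push_cast
    ring
  have hV' : ∀ t, t₀ ≤ t →
      2 * (y t + c * x t) * (g t - p * y t - q * x t + c * y t) + 2 * d * x t * y t ≤
        -(2 * c) * ((y t + c * x t) ^ 2 + d * x t ^ 2) + C ^ 2 / (p - c) := by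
    intro t ht
    have := oscillator_energy_deriv_le hc hcp (q := q) (x t) (y t) (g t)
    have := div_le_div_of_nonneg_right (sq_le_sq_of_abs_le (hg t ht)) (by linarith : 0 ≤ p - c)
    linarith
  set M := max ((y t₀ + c * x t₀) ^ 2 + d * x t₀ ^ 2) (C ^ 2 / (p - c) / (2 * c))
  have hVM := le_max_of_hasDerivAt_le_neg_mul_add (by positivity) hV hV'
  refine ⟨(1 + c) * √(M / d) + √M, fun t ht ↦ ?_⟩
  have hE := hVM t ht
  have hxB : |x t| ≤ √(M / d) :=
    Real.abs_le_sqrt <| (le_div_iff₀ hd).mpr (by nlinarith [sq_nonneg (y t + c * x t)])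
  have hzB : |y t + c * x t| ≤ √M := Real.abs_le_sqrt (by nlinarith [sq_nonneg (x t)])
  have hyB : |y t| ≤ c * √(M / d) + √M := by
    calc |y t| = |(y t + c * x t) - c * x t| := by ring_nf
      _ ≤ |y t + c * x t| + |c * x t| := abs_sub _ _
      _ ≤ √M + c * √(M / d) := by
          rw [abs_mul, abs_of_pos hc]
          gcongr
      _ = c * √(M / d) + √M := add_comm _ _
  constructor <;> nlinarith [Real.sqrt_nonneg M, Real.sqrt_nonneg (M / d)]

lemma exists_neg_root_factorization {Kp Kd Ki : ℝ} (hKd : 0 < Kd) (hKi : 0 < Ki)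
    (hRH : Ki < Kp * Kd) :
    ∃ r p q : ℝ, r < 0 ∧ 0 < p ∧ 0 < q ∧ Kd = p - r ∧ Kp = q - r * p ∧ Ki = -(r * q) := by
  obtain ⟨r, ⟨hr_gt, hr_lt⟩, hroot⟩ : ∃ r ∈ Ioo (-Kd) 0, r ^ 3 + Kd * r ^ 2 + Kp * r + Ki = 0 := by
    have hcont : ContinuousOn (fun s : ℝ ↦ s ^ 3 + Kd * s ^ 2 + Kp * s + Ki) (Icc (-Kd) 0) := by
      fun_prop
    refine intermediate_value_Ioo (by linarith) hcont ⟨?_, ?_⟩ <;> simp <;> nlinarith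
  refine ⟨r, Kd + r, Kp + r * (Kd + r), hr_lt, by linarith, ?_, by ring, by ring, by linarith⟩
  nlinarith

theorem stmt_16_general (Kp Kd Ki t₀ : ℝ) (hKd : 0 < Kd) (hKi : 0 < Ki)
    (hRH : Ki < Kp * Kd) (U k : ℝ → ℝ)
    (hUbdd : ∃ C : ℝ, ∀ t, t₀ ≤ t → |U t| ≤ C)
    (hk : ContDiff ℝ 3 k)
    (hode : ∀ t, t₀ ≤ t →
      iteratedDeriv 3 k t + Kd * iteratedDeriv 2 k t + Kp * deriv k t + Ki * k t = U t) :
    ∃ C : ℝ, ∀ t, t₀ ≤ t →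
      |k t| ≤ C ∧ |deriv k t| ≤ C ∧ |deriv (deriv k) t| ≤ C := by
  obtain ⟨C, hU⟩ := hUbdd
  obtain ⟨r, p, q, hr, hp, hq, rfl, rfl, rfl⟩ := exists_neg_root_factorization hKd hKi hRH
  have hD (n : ℕ) (hn : n < 3) (t : ℝ) :
      HasDerivAt (iteratedDeriv n k) (iteratedDeriv (n + 1) k t) t := by
    rw [iteratedDeriv_succ]
    exact (hk.differentiable_iteratedDeriv n (by exact_mod_cast hn) t).hasDerivAt
  have hk' (t : ℝ) : HasDerivAt k (deriv k t) t := by simpa using hD 0 (by norm_num) t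
  have hk'' (t : ℝ) : HasDerivAt (deriv k) (iteratedDeriv 2 k t) t := by
    simpa using hD 1 (by norm_num) t
  set u : ℝ → ℝ := fun s ↦ iteratedDeriv 2 k s + p * deriv k s + q * k s
  have hu (t : ℝ) (ht : t₀ ≤ t) : HasDerivAt u (r * u t + U t) t :=
    (((hD 2 (by norm_num) t).fun_add ((hk'' t).const_mul p)).fun_add
      ((hk' t).const_mul q)).congr_deriv (by linear_combination hode t ht)
  obtain ⟨Bu, hBu⟩ := exists_abs_le_of_hasDerivAt_eq_mul_add hr hU hu
  obtain ⟨A, hA⟩ := exists_abs_le_of_oscillator hp hq hBu (fun t _ ↦ hk' t)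
    (fun t _ ↦ (hk'' t).congr_deriv (by ring))
  refine ⟨max A (Bu + p * A + q * A), fun t ht ↦ ⟨(hA t ht).1.trans (le_max_left _ _),
    (hA t ht).2.trans (le_max_left _ _), le_max_of_le_right ?_⟩⟩
  have hk2 : deriv (deriv k) t = u t - p * deriv k t - q * k t := by
    rw [(hk'' t).deriv]
    ring
  calc |deriv (deriv k) t| ≤ |u t| + |p * deriv k t| + |q * k t| := by
        rw [hk2]
        linarith [abs_sub (u t - p * deriv k t) (q * k t), abs_sub (u t) (p * deriv k t)]
    _ ≤ Bu + p * A + q * A := by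
      rw [abs_mul, abs_mul, abs_of_pos hp, abs_of_pos hq]
      gcongr
      exacts [hBu t ht, (hA t ht).2, (hA t ht).1]

theorem stmt_16 (Kp Kd Ki t₀ : ℝ) (hKp : 0 < Kp) (hKd : 0 < Kd) (hKi : 0 < Ki)
    (hRH : Ki < Kp * Kd) (U k : ℝ → ℝ)
    (hUbdd : ∃ C : ℝ, ∀ t, t₀ ≤ t → |U t| ≤ C)
    (hUcont : ContinuousOn U (Set.Ici t₀))
    (hk : ContDiff ℝ 3 k)
    (hode : ∀ t, t₀ ≤ t →
      iteratedDeriv 3 k t + Kd * iteratedDeriv 2 k t + Kp * deriv k t + Ki * k t = U t) :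
    ∃ C : ℝ, ∀ t, t₀ ≤ t →
      |k t| ≤ C ∧ |deriv k t| ≤ C ∧ |deriv (deriv k) t| ≤ C :=
  stmt_16_general Kp Kd Ki t₀ hKd hKi hRH U k hUbdd hk hode
end
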